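/- The map q ↦ x ∧ q from [ℙ_m(ℝ³)]³ to vector fields has kernel exactly { q = x r : r ∈ ℙ_{m-1}(ℝ³) } (radial polynomial fields); consequently dim( x ∧ [ℙ_m(K)]³ ) = 3 dim ℙ_m - dim ℙ_{m-1} for any K ⊂ ℝ³ with nonempty interior, where dim ℙ_m = (m+1)(m+2)(m+3)/6. -/

import Mathlib

/-!
If `x ∧ q = 0` then `x₀ q₁ = x₁ q₀`; as `x₀` is prime and does not divide `x₁`, it divides
`q₀ = x₀ r`, and cancelling `x₀` in the other two components gives `q = x r`. Every monomial of
`x₀ r` is a monomial of `r` times `x₀`, so `r` has degree `< m`.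

A polynomial vanishing on a nonempty open set is zero (it is analytic), so restriction to `K` is
injective and, by rank–nullity, the dimension is `3 dim ℙ_m` minus the number of monomials of
degree `< m`. In three variables there are `multichoose 3 k = (k + 1) (k + 2) / 2` monomials of
degree `k`, and `n (n + 1) (n + 2) / 6` of degree `< n`.
-/

open MvPolynomial

open Finset

namespace Stmt18

/-- The components of the cross product `x ∧ q` of the position field with a polynomial
vector field `q`, as polynomials: `(x ∧ q)_i = x_{i+1} q_{i+2} - x_{i+2} q_{i+1}`. -/
noncomputable def crossComp (q : Fin 3 → MvPolynomial (Fin 3) ℝ) (i : Fin 3) :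
    MvPolynomial (Fin 3) ℝ :=
  X (i + 1) * q (i + 2) - X (i + 2) * q (i + 1)

section Degree

variable {σ R : Type*} [CommSemiring R]

lemma restrictTotalDegree_eq_restrictSupport (m : ℕ) :
    restrictTotalDegree σ R m = restrictSupport R {d | d.degree < m + 1} := by
  simp only [Nat.lt_succ_iff]
  rfl

lemma X_mul_mem_restrictTotalDegree_iff (i : σ) (r : MvPolynomial σ R) (m : ℕ) :
    X i * r ∈ restrictTotalDegree σ R m ↔ r ∈ restrictSupport R {d | d.degree < m} := by
  classical
  have hshift : addLeftEmbedding (Finsupp.single i 1) ⁻¹' {d | d.degree < m + 1} =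
      {d | d.degree < m} := by
    ext d
    simp [add_comm 1]
  simp only [restrictTotalDegree_eq_restrictSupport, mem_restrictSupport_iff, support_X_mul,
    coe_map, Set.image_subset_iff, hshift]

lemma totalDegree_le_of_mem_restrictSupport {r : MvPolynomial σ R} {m : ℕ}
    (hr : r ∈ restrictSupport R {d | d.degree < m}) : r.totalDegree ≤ m - 1 :=
  Finset.sup_le fun _ hd => Nat.le_sub_one_of_lt (hr hd)

lemma finrank_restrictSupport [StrongRankCondition R] (s : Set (σ →₀ ℕ)) :
    Module.finrank R (restrictSupport R s) = Nat.card s :=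
  Module.finrank_eq_nat_card_basis (basisRestrictSupport R s)

end Degree

lemma card_setOf_degree_lt {σ : Type*} [Fintype σ] [DecidableEq σ] (n : ℕ) :
    Nat.card {d : σ →₀ ℕ | d.degree < n} = ∑ k ∈ range n, (Fintype.card σ).multichoose k := by
  have hset : {d : σ →₀ ℕ | d.degree < n} =
      ((range n).biUnion fun k => (univ : Finset σ).finsuppAntidiag k : Finset (σ →₀ ℕ)) := by
    ext d
    simp [Finsupp.degree_eq_sum]
  rw [hset, Nat.card_coe_set_eq, Set.ncard_coe_finset, card_biUnion]
  · simp [card_finsuppAntidiag_nat_eq_multichoose]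
  · intro k _ l _ hkl
    exact disjoint_left.2 fun d hk hl =>
      hkl ((mem_finsuppAntidiag.1 hk).1.symm.trans (mem_finsuppAntidiag.1 hl).1)

lemma six_mul_sum_range_multichoose_three (n : ℕ) :
    6 * ∑ k ∈ range n, Nat.multichoose 3 k = n * (n + 1) * (n + 2) := by
  have two_mul_multichoose_three (k : ℕ) : 2 * Nat.multichoose 3 k = (k + 1) * (k + 2) := by
    induction k with
    | zero => simp
    | succ k ih => rw [Nat.multichoose_succ_succ, Nat.multichoose_two, mul_add, ih]; ring
  induction n with
  | zero => simp
  | succ n ih =>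
    rw [sum_range_succ, mul_add, ih, show 6 * Nat.multichoose 3 n = 3 * (2 * Nat.multichoose 3 n)
      by ring, two_mul_multichoose_three]
    ring

lemma finrank_restrictSupport_degree_lt_fin_three {R : Type*} [CommSemiring R]
    [StrongRankCondition R] (n : ℕ) :
    Module.finrank R (restrictSupport R {d : Fin 3 →₀ ℕ | d.degree < n}) =
      n * (n + 1) * (n + 2) / 6 := by
  rw [finrank_restrictSupport, card_setOf_degree_lt, Fintype.card_fin,
    ← six_mul_sum_range_multichoose_three, Nat.mul_div_cancel_left _ (by norm_num)]

lemma finrank_restrictTotalDegree_fin_three {R : Type*} [CommSemiring R]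
    [StrongRankCondition R] (m : ℕ) :
    Module.finrank R (restrictTotalDegree (Fin 3) R m) = (m + 1) * (m + 2) * (m + 3) / 6 := by
  rw [restrictTotalDegree_eq_restrictSupport, finrank_restrictSupport_degree_lt_fin_three]

lemma X_dvd_of_X_mul_eq_X_mul {σ R : Type*} [CommRing R] [IsDomain R] {i j : σ} (hij : i ≠ j)
    {p q : MvPolynomial σ R} (h : X i * p = X j * q) : X i ∣ q :=
  ((X_prime.dvd_or_dvd ⟨p, h.symm⟩).resolve_left fun hdvd => hij (X_dvd_X.1 hdvd))

lemma eq_zero_of_eval_eq_zero_of_isOpen {E σ : Type*}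
    [NormedAddCommGroup E] [NormedSpace ℝ E] (ℓ : E →L[ℝ] σ → ℝ)
    (hℓ : Function.Surjective ℓ) {U : Set E} (hU : IsOpen U) (hne : U.Nonempty)
    {p : MvPolynomial σ ℝ} (h : ∀ x ∈ U, eval (ℓ x) p = 0) : p = 0 := by
  obtain ⟨x₀, hx₀⟩ := hne
  have hzero : Set.EqOn (fun x => eval (ℓ x) p) 0 Set.univ :=
    (AnalyticOnNhd.eval_continuousLinearMap ℓ p).eqOn_zero_of_preconnected_of_eventuallyEq_zero
      convex_univ.isPreconnected (Set.mem_univ x₀) (Filter.eventually_of_mem (hU.mem_nhds hx₀) h)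
  refine MvPolynomial.funext fun y => ?_
  obtain ⟨x, rfl⟩ := hℓ y
  simpa using hzero (Set.mem_univ x)

lemma crossComp_eq_zero_iff (q : Fin 3 → MvPolynomial (Fin 3) ℝ) :
    (∀ i, crossComp q i = 0) ↔ ∃ r, ∀ i, q i = X i * r := by
  constructor
  · intro h
    have h20 : X 2 * q 0 = X 0 * q 2 := sub_eq_zero.1 (h 1)
    have h01 : X 0 * q 1 = X 1 * q 0 := sub_eq_zero.1 (h 2)
    obtain ⟨r, hr⟩ := X_dvd_of_X_mul_eq_X_mul (by decide) h01
    have hX0 : (X 0 : MvPolynomial (Fin 3) ℝ) ≠ 0 := X_ne_zero 0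
    have hq1 : q 1 = X 1 * r := mul_left_cancel₀ hX0 (by rw [h01, hr]; ring)
    have hq2 : q 2 = X 2 * r := mul_left_cancel₀ hX0 (by rw [← h20, hr]; ring)
    exact ⟨r, fun i => by fin_cases i <;> assumption⟩
  · rintro ⟨r, hr⟩ i
    rw [crossComp, hr, hr]
    ring

lemma crossComp_eq_zero_iff_of_totalDegree_le {m : ℕ} {q : Fin 3 → MvPolynomial (Fin 3) ℝ}
    (hq : ∀ i, (q i).totalDegree ≤ m) :
    (∀ i, crossComp q i = 0) ↔
      ∃ r : MvPolynomial (Fin 3) ℝ, r.totalDegree ≤ m - 1 ∧ ∀ i, q i = X i * r := by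
  rw [crossComp_eq_zero_iff]
  refine ⟨fun ⟨r, hr⟩ => ⟨r, ?_, hr⟩, fun ⟨r, _, hr⟩ => ⟨r, hr⟩⟩
  have h0 : X 0 * r ∈ restrictTotalDegree (Fin 3) ℝ m := by
    rw [mem_restrictTotalDegree, ← hr]
    exact hq 0
  exact totalDegree_le_of_mem_restrictSupport ((X_mul_mem_restrictTotalDegree_iff 0 r m).1 h0)

noncomputable def crossCompₗ :
    (Fin 3 → MvPolynomial (Fin 3) ℝ) →ₗ[ℝ] (Fin 3 → MvPolynomial (Fin 3) ℝ) where
  toFun := crossComp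
  map_add' q q' := by
    funext i
    simp only [crossComp, Pi.add_apply]
    ring
  map_smul' c q := by
    funext i
    simp only [crossComp, Pi.smul_apply, RingHom.id_apply, mul_smul_comm, smul_sub]

noncomputable def evalOn {σ ι : Type*} (K : Set (EuclideanSpace ℝ σ)) :
    (ι → MvPolynomial σ ℝ) →ₗ[ℝ] (K → ι → ℝ) :=
  LinearMap.pi fun x => LinearMap.pi fun i =>
    (aeval fun j => (x : EuclideanSpace ℝ σ) j).toLinearMap ∘ₗ LinearMap.proj i

lemma evalOn_apply {σ ι : Type*} (K : Set (EuclideanSpace ℝ σ)) (p : ι → MvPolynomial σ ℝ)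
    (x : K) (i : ι) : evalOn K p x i = eval (fun j => (x : EuclideanSpace ℝ σ) j) (p i) := by
  simp [evalOn]

lemma evalOn_injective {σ ι : Type*} [Fintype σ] {K : Set (EuclideanSpace ℝ σ)}
    (hK : (interior K).Nonempty) :
    Function.Injective (evalOn (ι := ι) K) := by
  rw [← LinearMap.ker_eq_bot, LinearMap.ker_eq_bot']
  intro p hp
  funext i
  refine eq_zero_of_eval_eq_zero_of_isOpen (PiLp.continuousLinearEquiv 2 ℝ _).toContinuousLinearMap
    (PiLp.continuousLinearEquiv 2 ℝ _).surjective isOpen_interior hK fun x hx => ?_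
  exact (evalOn_apply K p ⟨x, interior_subset hx⟩ i).symm.trans
    (congrFun (congrFun hp ⟨x, interior_subset hx⟩) i)

/-- The domain is not `restrictTotalDegree (Fin 3) ℝ (m - 1)`, which would be one-dimensional
instead of zero for `m = 0`. -/
noncomputable def radial (m : ℕ) :
    restrictSupport ℝ {d : Fin 3 →₀ ℕ | d.degree < m} →ₗ[ℝ]
      (Fin 3 → restrictTotalDegree (Fin 3) ℝ m) :=
  LinearMap.pi fun i => (LinearMap.mulLeft ℝ (X i)).restrict
    fun r hr => (X_mul_mem_restrictTotalDegree_iff i r m).2 hr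

lemma radial_injective (m : ℕ) : Function.Injective (radial m) := fun _ _ h =>
  Subtype.ext (mul_left_cancel₀ (X_ne_zero 0) (congrArg Subtype.val (congrFun h 0)))

noncomputable def crossCompRestrict (m : ℕ) :
    (Fin 3 → restrictTotalDegree (Fin 3) ℝ m) →ₗ[ℝ] (Fin 3 → MvPolynomial (Fin 3) ℝ) :=
  crossCompₗ ∘ₗ LinearMap.piMap fun _ => (restrictTotalDegree (Fin 3) ℝ m).subtype

lemma crossCompRestrict_apply (m : ℕ) (q : Fin 3 → restrictTotalDegree (Fin 3) ℝ m) :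
    crossCompRestrict m q = crossComp fun i => q i :=
  rfl

lemma ker_crossCompRestrict (m : ℕ) :
    LinearMap.ker (crossCompRestrict m) = LinearMap.range (radial m) := by
  ext q
  rw [LinearMap.mem_ker, LinearMap.mem_range, crossCompRestrict_apply, funext_iff]
  simp only [Pi.zero_apply]
  rw [crossComp_eq_zero_iff]
  constructor
  · rintro ⟨r, hr⟩
    have hr_mem : r ∈ restrictSupport ℝ {d : Fin 3 →₀ ℕ | d.degree < m} :=
      (X_mul_mem_restrictTotalDegree_iff 0 r m).1 (hr 0 ▸ (q 0).2)
    exact ⟨⟨r, hr_mem⟩, funext fun i => Subtype.ext (hr i).symm⟩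
  · rintro ⟨r, rfl⟩
    exact ⟨r, fun i => rfl⟩

lemma evalOn_comp_crossCompRestrict_apply (m : ℕ) (K : Set (EuclideanSpace ℝ (Fin 3)))
    (q : Fin 3 → restrictTotalDegree (Fin 3) ℝ m) (x : K) (i : Fin 3) :
    (evalOn K ∘ₗ crossCompRestrict m) q x i =
      eval (fun j => (x : EuclideanSpace ℝ (Fin 3)) j) (crossComp (fun i => q i) i) := by
  rw [LinearMap.comp_apply, evalOn_apply, crossCompRestrict_apply]

lemma span_crossComp_eq_range (m : ℕ) (K : Set (EuclideanSpace ℝ (Fin 3))) :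
    Submodule.span ℝ {f : K → Fin 3 → ℝ | ∃ q : Fin 3 → MvPolynomial (Fin 3) ℝ,
      (∀ i, (q i).totalDegree ≤ m) ∧
      ∀ x : K, ∀ i, f x i = eval (fun j => (x : EuclideanSpace ℝ (Fin 3)) j) (crossComp q i)} =
      LinearMap.range (evalOn K ∘ₗ crossCompRestrict m) := by
  refine (congrArg (Submodule.span ℝ) (Set.ext fun f => ?_)).trans (Submodule.span_eq _)
  constructor
  · rintro ⟨q, hq, hf⟩
    refine ⟨fun i => ⟨q i, (mem_restrictTotalDegree _ _ _).2 (hq i)⟩,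
      funext fun x => funext fun i => ?_⟩
    rw [evalOn_comp_crossCompRestrict_apply, hf]
  · rintro ⟨q, rfl⟩
    exact ⟨fun i => q i, fun i => (mem_restrictTotalDegree _ _ _).1 (q i).2,
      evalOn_comp_crossCompRestrict_apply m K q⟩

lemma finrank_range_evalOn_comp_crossCompRestrict (m : ℕ) {K : Set (EuclideanSpace ℝ (Fin 3))}
    (hK : (interior K).Nonempty) :
    Module.finrank ℝ (LinearMap.range (evalOn K ∘ₗ crossCompRestrict m)) =
      3 * ((m + 1) * (m + 2) * (m + 3) / 6) - m * (m + 1) * (m + 2) / 6 := by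
  have hdom : Module.finrank ℝ (Fin 3 → restrictTotalDegree (Fin 3) ℝ m) =
      3 * ((m + 1) * (m + 2) * (m + 3) / 6) := by
    simp [Module.finrank_pi_fintype, finrank_restrictTotalDegree_fin_three]
  have hker : Module.finrank ℝ (LinearMap.ker (evalOn K ∘ₗ crossCompRestrict m)) =
      m * (m + 1) * (m + 2) / 6 := by
    rw [LinearMap.ker_comp_of_ker_eq_bot _ (LinearMap.ker_eq_bot.2 (evalOn_injective hK)),
      ker_crossCompRestrict, LinearMap.finrank_range_of_inj (radial_injective m),
      finrank_restrictSupport_degree_lt_fin_three]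
  have := LinearMap.finrank_range_add_finrank_ker (evalOn K ∘ₗ crossCompRestrict m)
  omega

/-- the kernel of the map `q ↦ x ∧ q` on `[ℙ_m(ℝ³)]³` consists exactly of
the radial polynomial fields `q = x r` with `r ∈ ℙ_{m-1}(ℝ³)`; consequently, for any
`K ⊂ ℝ³` with nonempty interior,
`dim (x ∧ [ℙ_m(K)]³) = 3 dim ℙ_m - dim ℙ_{m-1}`
with `dim ℙ_m = (m+1)(m+2)(m+3)/6` and `dim ℙ_{m-1} = m(m+1)(m+2)/6`. -/
theorem stmt18 (m : ℕ) (K : Set (EuclideanSpace ℝ (Fin 3))) (hK : (interior K).Nonempty) :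
    (∀ q : Fin 3 → MvPolynomial (Fin 3) ℝ, (∀ i, (q i).totalDegree ≤ m) →
      ((∀ i, crossComp q i = 0) ↔
        ∃ r : MvPolynomial (Fin 3) ℝ, r.totalDegree ≤ m - 1 ∧ ∀ i, q i = X i * r)) ∧
    Module.finrank ℝ
      (Submodule.span ℝ {f : K → Fin 3 → ℝ | ∃ q : Fin 3 → MvPolynomial (Fin 3) ℝ,
        (∀ i, (q i).totalDegree ≤ m) ∧
        ∀ x : K, ∀ i, f x i = eval (fun j => (x : EuclideanSpace ℝ (Fin 3)) j) (crossComp q i)})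
      = 3 * ((m + 1) * (m + 2) * (m + 3) / 6) - m * (m + 1) * (m + 2) / 6 := by
  refine ⟨fun _ => crossComp_eq_zero_iff_of_totalDegree_le, ?_⟩
  rw [span_crossComp_eq_range, finrank_range_evalOn_comp_crossCompRestrict m hK]

end Stmt18
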